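/- arXiv:1506.00165 — 13 statements merged into one kernel-verified Lean document; each statement's English description precedes it below -/
import Mathlib

section
/- For every finite concept class C ⊆ {0,1}^n, the number of strongly shattered sets of C is at most |C|, which is at most the number of shattered sets of C (the Sandwich Theorem). -/
variable {n : ℕ}

/-- `S` is shattered by the concept class `C`. -/
def Shatters (C : Set (Fin n → Bool)) (S : Finset (Fin n)) : Prop :=
  ∀ f : Fin n → Bool, ∃ c ∈ C, ∀ x ∈ S, c x = f x

/-- `B` is a cube of `C` with dimension set `S`. -/
def IsCube (C B : Set (Fin n → Bool)) (S : Finset (Fin n)) : Prop :=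
  B ⊆ C ∧ (∀ b ∈ B, ∀ b' ∈ B, ∀ x, x ∉ S → b x = b' x) ∧
    (∀ f : Fin n → Bool, ∃ b ∈ B, ∀ x ∈ S, b x = f x)

/-- `S` is strongly shattered by `C`. -/
def StronglyShatters (C : Set (Fin n → Bool)) (S : Finset (Fin n)) : Prop :=
  ∃ B, IsCube C B S

/-- `C` is extremal: every shattered set is strongly shattered. -/
def Extremal (C : Set (Fin n → Bool)) : Prop :=
  ∀ S, Shatters C S → StronglyShatters C S

lemma shatters_notMem {C : Set (Fin n → Bool)} {x : Fin n} {S : Finset (Fin n)}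
    (hall : ∀ c ∈ C, c x = false) (h : Shatters C S) : x ∉ S := by
  intro hx
  obtain ⟨c, hc, hmatch⟩ := h (fun _ => true)
  have h2 := hmatch x hx
  rw [hall c hc] at h2
  simp at h2

lemma sandwich_aux (T : Finset (Fin n)) :
    ∀ C : Set (Fin n → Bool),
    (∀ c ∈ C, ∀ c' ∈ C, ∀ y, y ∉ T → c y = c' y) →
    {S : Finset (Fin n) | StronglyShatters C S}.ncard ≤ C.ncard ∧
      C.ncard ≤ {S : Finset (Fin n) | Shatters C S}.ncard := by
  classical
  induction T using Finset.induction_on with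
  | empty =>
    intro C hC
    rcases Set.eq_empty_or_nonempty C with h | ⟨c, hc⟩
    · subst h
      constructor
      · have hst : {S : Finset (Fin n) | StronglyShatters (∅ : Set (Fin n → Bool)) S} = ∅ := by
          ext S
          simp only [Set.mem_setOf_eq, Set.mem_empty_iff_false, iff_false]
          rintro ⟨B, hBC, -, hsurj⟩
          obtain ⟨b, hb, -⟩ := hsurj (fun _ => false)
          exact hBC hb
        rw [hst]; simp
      · simp
    · have hsingle : C = {c} := by
        ext c'
        simp only [Set.mem_singleton_iff]
        constructor
        · intro h'
          funext y
          exact hC c' h' c hc y (Finset.notMem_empty y)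
        · rintro rfl; exact hc
      have hCcard : C.ncard = 1 := by rw [hsingle]; exact Set.ncard_singleton c
      constructor
      · have hstsub : {S : Finset (Fin n) | StronglyShatters C S} ⊆ {(∅ : Finset (Fin n))} := by
          intro S hS
          obtain ⟨B, hBC, -, hsurj⟩ := hS
          simp only [Set.mem_singleton_iff]
          by_contra hne
          obtain ⟨y, hy⟩ := Finset.nonempty_iff_ne_empty.2 hne
          obtain ⟨b, hb, hmb⟩ := hsurj (fun _ => true)
          obtain ⟨b', hb', hmb'⟩ := hsurj (fun _ => false)
          have h1 : b = c := by rw [hsingle] at hBC; exact hBC hb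
          have h2 : b' = c := by rw [hsingle] at hBC; exact hBC hb'
          have h3 := hmb y hy
          have h4 := hmb' y hy
          rw [h1] at h3; rw [h2] at h4; rw [h3] at h4; simp at h4
        calc {S : Finset (Fin n) | StronglyShatters C S}.ncard
            ≤ ({(∅ : Finset (Fin n))} : Set (Finset (Fin n))).ncard :=
              Set.ncard_le_ncard hstsub (Set.toFinite _)
          _ = 1 := Set.ncard_singleton _
          _ = C.ncard := hCcard.symm
      · have hssub : ({(∅ : Finset (Fin n))} : Set (Finset (Fin n))) ⊆
            {S : Finset (Fin n) | Shatters C S} := by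
          rintro S rfl
          intro f
          exact ⟨c, hc, fun y hy => absurd hy (Finset.notMem_empty y)⟩
        calc C.ncard = 1 := hCcard
          _ = ({(∅ : Finset (Fin n))} : Set (Finset (Fin n))).ncard := (Set.ncard_singleton _).symm
          _ ≤ {S : Finset (Fin n) | Shatters C S}.ncard :=
              Set.ncard_le_ncard hssub (Set.toFinite _)
  | @insert x T hxT ih =>
    intro C hC
    set fl : (Fin n → Bool) → (Fin n → Bool) := fun c => Function.update c x false with hfl
    set C0 : Set (Fin n → Bool) := {c ∈ C | c x = false} with hC0
    set C1 : Set (Fin n → Bool) := {c ∈ C | c x = true} with hC1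
    set D1 : Set (Fin n → Bool) := fl '' C1 with hD1
    set D : Set (Fin n → Bool) := C0 ∪ D1 with hD
    set I : Set (Fin n → Bool) := C0 ∩ D1 with hI
    have hflx : ∀ c, fl c x = false := fun c => Function.update_self x false c
    have hflne : ∀ c y, y ≠ x → fl c y = c y := fun c y h => Function.update_of_ne h false c
    have hDx : ∀ d ∈ D, d x = false := by
      rintro d (⟨hdC, hdx⟩ | ⟨c, hc, rfl⟩)
      · exact hdx
      · exact hflx c
    have hDC : ∀ d ∈ D, ∃ c ∈ C, ∀ y, y ≠ x → d y = c y := by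
      rintro d (hd | ⟨c, hc, rfl⟩)
      · exact ⟨d, hd.1, fun y _ => rfl⟩
      · exact ⟨c, hc.1, fun y hy => hflne c y hy⟩
    have hDagree : ∀ d ∈ D, ∀ d' ∈ D, ∀ y, y ∉ T → d y = d' y := by
      intro d hd d' hd' y hy
      by_cases hyx : y = x
      · subst hyx; rw [hDx d hd, hDx d' hd']
      · obtain ⟨c, hc, he⟩ := hDC d hd
        obtain ⟨c', hc', he'⟩ := hDC d' hd'
        rw [he y hyx, he' y hyx]
        exact hC c hc c' hc' y (by simp [Finset.mem_insert, hyx, hy])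
    have hID : I ⊆ D := fun d hd => Or.inl hd.1
    have hIagree : ∀ d ∈ I, ∀ d' ∈ I, ∀ y, y ∉ T → d y = d' y := by
      intro d hd d' hd' y hy
      exact hDagree d (hID hd) d' (hID hd') y hy
    obtain ⟨hDst, hDs⟩ := ih D hDagree
    obtain ⟨hIst, hIs⟩ := ih I hIagree
    -- cardinality bookkeeping
    have hC01 : C = C0 ∪ C1 := by
      ext c
      simp only [hC0, hC1, Set.mem_union, Set.mem_setOf_eq]
      constructor
      · intro h
        cases hcx : c x
        · exact Or.inl ⟨h, rfl⟩
        · exact Or.inr ⟨h, rfl⟩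
      · rintro (⟨h, -⟩ | ⟨h, -⟩) <;> exact h
    have hdisj01 : Disjoint C0 C1 := by
      rw [Set.disjoint_left]
      rintro c ⟨-, h0⟩ ⟨-, h1⟩
      rw [h0] at h1; exact Bool.false_ne_true h1
    have hcardC : C.ncard = C0.ncard + C1.ncard := by
      rw [hC01]
      exact Set.ncard_union_eq hdisj01 (Set.toFinite _) (Set.toFinite _)
    have hinjfl : Set.InjOn fl C1 := by
      intro a ha b hb hab
      funext y
      by_cases hyx : y = x
      · subst hyx; rw [ha.2, hb.2]
      · have := congrFun hab y
        rwa [hflne a y hyx, hflne b y hyx] at this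
    have hcardD1 : D1.ncard = C1.ncard := Set.ncard_image_of_injOn hinjfl
    have hcardDI : D.ncard + I.ncard = C.ncard := by
      rw [hD, hI, Set.ncard_union_add_ncard_inter _ _ (Set.toFinite _) (Set.toFinite _),
        hcardD1, ← hcardC]
    -- shattering transfer (upper bound direction)
    have hsD : ∀ S : Finset (Fin n), Shatters D S → Shatters C S ∧ x ∉ S := by
      intro S hS
      have hxS : x ∉ S := shatters_notMem hDx hS
      refine ⟨fun f => ?_, hxS⟩
      obtain ⟨d, hd, hm⟩ := hS f
      obtain ⟨c, hc, he⟩ := hDC d hd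
      refine ⟨c, hc, fun y hy => ?_⟩
      have hyx : y ≠ x := fun h => hxS (h ▸ hy)
      rw [← he y hyx]; exact hm y hy
    have hsI : ∀ S : Finset (Fin n), Shatters I S → Shatters C (insert x S) ∧ x ∉ S := by
      intro S hS
      have hxS : x ∉ S := shatters_notMem (fun d hd => hDx d (hID hd)) hS
      refine ⟨fun f => ?_, hxS⟩
      obtain ⟨d, ⟨hdC0, hdD1⟩, hm⟩ := hS f
      cases hfx : f x
      · refine ⟨d, hdC0.1, fun y hy => ?_⟩
        rcases Finset.mem_insert.1 hy with rfl | hy'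
        · rw [hdC0.2, hfx]
        · exact hm y hy'
      · obtain ⟨c, hc1, hflc⟩ := hdD1
        refine ⟨c, hc1.1, fun y hy => ?_⟩
        rcases Finset.mem_insert.1 hy with rfl | hy'
        · rw [hc1.2, hfx]
        · have hyx : y ≠ x := fun h => hxS (h ▸ hy')
          rw [← hflne c y hyx, hflc]; exact hm y hy'
    -- strong shattering transfer (lower bound direction)
    have hstD : ∀ S : Finset (Fin n), StronglyShatters C S → x ∉ S → StronglyShatters D S := by
      rintro S ⟨B, hBC, hBa, hBs⟩ hxS
      obtain ⟨b0, hb0, -⟩ := hBs (fun _ => false)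
      cases hb0x : b0 x
      · -- all of B takes value false at x
        refine ⟨B, fun b hb => Or.inl ⟨hBC hb, ?_⟩, hBa, hBs⟩
        rw [hBa b hb b0 hb0 x hxS, hb0x]
      · -- all of B takes value true at x; use the flipped cube
        refine ⟨fl '' B, ?_, ?_, ?_⟩
        · rintro d ⟨b, hb, rfl⟩
          refine Or.inr ⟨b, ⟨hBC hb, ?_⟩, rfl⟩
          rw [hBa b hb b0 hb0 x hxS, hb0x]
        · rintro d ⟨b, hb, rfl⟩ d' ⟨b', hb', rfl⟩ y hy
          by_cases hyx : y = x
          · subst hyx; rw [hflx, hflx]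
          · rw [hflne b y hyx, hflne b' y hyx]
            exact hBa b hb b' hb' y hy
        · intro f
          obtain ⟨b, hb, hm⟩ := hBs f
          refine ⟨fl b, ⟨b, hb, rfl⟩, fun y hy => ?_⟩
          have hyx : y ≠ x := fun h => hxS (h ▸ hy)
          rw [hflne b y hyx]; exact hm y hy
    have hstI : ∀ S : Finset (Fin n), StronglyShatters C S → x ∈ S →
        StronglyShatters I (S.erase x) := by
      rintro S ⟨B, hBC, hBa, hBs⟩ hxS
      refine ⟨{b ∈ B | b x = false}, ?_, ?_, ?_⟩
      · rintro b ⟨hbB, hbx⟩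
        refine ⟨⟨hBC hbB, hbx⟩, ?_⟩
        obtain ⟨b', hb', hm⟩ := hBs (Function.update b x true)
        have hb'x : b' x = true := by
          rw [hm x hxS]; exact Function.update_self x true b
        refine ⟨b', ⟨hBC hb', hb'x⟩, ?_⟩
        funext y
        by_cases hyx : y = x
        · subst hyx; rw [hflx, hbx]
        · rw [hflne b' y hyx]
          by_cases hyS : y ∈ S
          · rw [hm y hyS, Function.update_of_ne hyx]
          · exact hBa b' hb' b hbB y hyS
      · rintro b ⟨hbB, hbx⟩ b' ⟨hb'B, hb'x⟩ y hy
        by_cases hyx : y = x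
        · subst hyx; rw [hbx, hb'x]
        · have hyS : y ∉ S := fun h => hy (Finset.mem_erase.2 ⟨hyx, h⟩)
          exact hBa b hbB b' hb'B y hyS
      · intro f
        obtain ⟨b, hb, hm⟩ := hBs (Function.update f x false)
        have hbx : b x = false := by
          rw [hm x hxS]; exact Function.update_self x false f
        refine ⟨b, ⟨hb, hbx⟩, fun y hy => ?_⟩
        obtain ⟨hyx, hyS⟩ := Finset.mem_erase.1 hy
        rw [hm y hyS, Function.update_of_ne hyx]
    -- conclude
    constructor
    · -- |st(C)| ≤ |C|
      set A : Set (Finset (Fin n)) := {S | StronglyShatters C S ∧ x ∉ S} with hA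
      set Bs : Set (Finset (Fin n)) := {S | StronglyShatters C S ∧ x ∈ S} with hBs'
      have hunion : {S : Finset (Fin n) | StronglyShatters C S} = A ∪ Bs := by
        ext S
        simp only [hA, hBs', Set.mem_union, Set.mem_setOf_eq]
        by_cases hx : x ∈ S <;> tauto
      have hdisjAB : Disjoint A Bs := by
        rw [Set.disjoint_left]
        rintro S ⟨-, h1⟩ ⟨-, h2⟩
        exact h1 h2
      have hAsub : A ⊆ {S : Finset (Fin n) | StronglyShatters D S} := by
        rintro S ⟨h1, h2⟩
        exact hstD S h1 h2
      have hBsub : (fun S => Finset.erase S x) '' Bs ⊆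
          {S : Finset (Fin n) | StronglyShatters I S} := by
        rintro S' ⟨S, ⟨h1, h2⟩, rfl⟩
        exact hstI S h1 h2
      have hBinj : Set.InjOn (fun S => Finset.erase S x) Bs := by
        rintro S hS S' hS' heq
        have h1 : insert x (S.erase x) = insert x (S'.erase x) := congrArg (insert x) heq
        rwa [Finset.insert_erase hS.2, Finset.insert_erase hS'.2] at h1
      have hBcard : Bs.ncard = ((fun S => Finset.erase S x) '' Bs).ncard :=
        (Set.ncard_image_of_injOn hBinj).symm
      calc {S : Finset (Fin n) | StronglyShatters C S}.ncard
          = A.ncard + Bs.ncard := by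
            rw [hunion]
            exact Set.ncard_union_eq hdisjAB (Set.toFinite _) (Set.toFinite _)
        _ ≤ {S : Finset (Fin n) | StronglyShatters D S}.ncard +
            {S : Finset (Fin n) | StronglyShatters I S}.ncard := by
            refine add_le_add (Set.ncard_le_ncard hAsub (Set.toFinite _)) ?_
            rw [hBcard]
            exact Set.ncard_le_ncard hBsub (Set.toFinite _)
        _ ≤ D.ncard + I.ncard := add_le_add hDst hIst
        _ = C.ncard := hcardDI
    · -- |C| ≤ |s(C)|
      have hsub : {S : Finset (Fin n) | Shatters D S} ∪
          (insert x) '' {S : Finset (Fin n) | Shatters I S} ⊆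
          {S : Finset (Fin n) | Shatters C S} := by
        rintro S (hS | ⟨S', hS', rfl⟩)
        · exact (hsD S hS).1
        · exact (hsI S' hS').1
      have hdisjs : Disjoint {S : Finset (Fin n) | Shatters D S}
          ((insert x) '' {S : Finset (Fin n) | Shatters I S}) := by
        rw [Set.disjoint_left]
        rintro S hS ⟨S', hS', rfl⟩
        exact (hsD _ hS).2 (Finset.mem_insert_self x S')
      have hinjins : Set.InjOn (insert x) {S : Finset (Fin n) | Shatters I S} := by
        intro S hS S' hS' heq
        have hxS := (hsI S hS).2
        have hxS' := (hsI S' hS').2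
        have h1 : (insert x S).erase x = (insert x S').erase x := by rw [heq]
        rwa [Finset.erase_insert hxS, Finset.erase_insert hxS'] at h1
      calc C.ncard = D.ncard + I.ncard := hcardDI.symm
        _ ≤ {S : Finset (Fin n) | Shatters D S}.ncard +
            {S : Finset (Fin n) | Shatters I S}.ncard := add_le_add hDs hIs
        _ = {S : Finset (Fin n) | Shatters D S}.ncard +
            ((insert x) '' {S : Finset (Fin n) | Shatters I S}).ncard := by
            rw [Set.ncard_image_of_injOn hinjins]
        _ = ({S : Finset (Fin n) | Shatters D S} ∪
            (insert x) '' {S : Finset (Fin n) | Shatters I S}).ncard :=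
            (Set.ncard_union_eq hdisjs (Set.toFinite _) (Set.toFinite _)).symm
        _ ≤ {S : Finset (Fin n) | Shatters C S}.ncard :=
            Set.ncard_le_ncard hsub (Set.toFinite _)

/-- The Sandwich Theorem: `|st(C)| ≤ |C| ≤ |s(C)|`. -/
theorem sandwich_theorem (n : ℕ) (C : Set (Fin n → Bool)) :
    {S : Finset (Fin n) | StronglyShatters C S}.ncard ≤ C.ncard ∧
      C.ncard ≤ {S : Finset (Fin n) | Shatters C S}.ncard := by
  exact sandwich_aux Finset.univ C (fun c _ c' _ y hy => absurd (Finset.mem_univ y) hy)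
end

section
/- Every concept class C ⊆ {0,1}^n satisfies |C| ≤ ∑_{i=0}^{d} binomial(n, i), where d is the VC dimension of C (Sauer-Shelah Lemma), as a consequence of the upper bound |C| ≤ |s(C)| together with the fact that every shattered set has size at most d. -/
variable {n : ℕ}

/-- The Sauer-Shelah Lemma. -/
theorem sauer_shelah (n d : ℕ) (C : Set (Fin n → Bool))
    (hd : ∀ S : Finset (Fin n), Shatters C S → S.card ≤ d) :
    C.ncard ≤ ∑ i ∈ Finset.range (d + 1), n.choose i := by
  classical
  set F : (Fin n → Bool) → Finset (Fin n) := fun c => Finset.univ.filter (fun x => c x = true)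
    with hF
  have hFinj : Function.Injective F := by
    intro c c' h
    funext x
    have := Finset.ext_iff.1 h x
    simp [hF] at this
    cases hc : c x <;> cases hc' : c' x <;> simp_all
  set 𝒜 : Finset (Finset (Fin n)) := C.toFinite.toFinset.image F with h𝒜
  have hcard : C.ncard = 𝒜.card := by
    rw [h𝒜, Finset.card_image_of_injective _ hFinj, Set.ncard_eq_toFinset_card _ C.toFinite]
  have hsh : ∀ s ∈ 𝒜.shatterer, Shatters C s := by
    intro s hs f
    have hs' := (Finset.mem_shatterer.1 hs)
    obtain ⟨u, hu, hsu⟩ := hs' (Finset.filter_subset (fun x => f x = true) s)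
    rw [h𝒜, Finset.mem_image] at hu
    obtain ⟨c, hc, rfl⟩ := hu
    refine ⟨c, (Set.Finite.mem_toFinset _).1 hc, fun x hx => ?_⟩
    have := Finset.ext_iff.1 hsu x
    simp [hF, hx] at this
    cases hcx : c x <;> cases hfx : f x <;> simp_all
  have hsub : 𝒜.shatterer ⊆ (Finset.range (d + 1)).biUnion
      (fun i => Finset.powersetCard i (Finset.univ : Finset (Fin n))) := by
    intro s hs
    simp only [Finset.mem_biUnion, Finset.mem_range, Finset.mem_powersetCard]
    exact ⟨s.card, Nat.lt_succ_of_le (hd s (hsh s hs)), Finset.subset_univ s, rfl⟩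
  calc C.ncard = 𝒜.card := hcard
    _ ≤ 𝒜.shatterer.card := Finset.card_le_card_shatterer 𝒜
    _ ≤ _ := Finset.card_le_card hsub
    _ ≤ ∑ i ∈ Finset.range (d + 1), n.choose i := by
        refine (Finset.card_biUnion_le).trans (le_of_eq ?_)
        simp [Finset.card_powersetCard]
end

section
/- If C' is obtained from a concept class C ⊆ {0,1}^n by one down-shifting step on a coordinate x, then |C'| = |C|, every set shattered by C' is shattered by C, and every set strongly shattered by C is strongly shattered by C'. -/
variable {n : ℕ}

open Classical in
/-- The class obtained from `C` by one down-shifting step on coordinate `x`. -/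
noncomputable def downShift (C : Set (Fin n → Bool)) (x : Fin n) : Set (Fin n → Bool) :=
  (fun c => if c x = true ∧ Function.update c x false ∉ C
      then Function.update c x false else c) '' C

open Classical in
/-- The shift map used in `downShift`. -/
noncomputable def phiShift (C : Set (Fin n → Bool)) (x : Fin n) (c : Fin n → Bool) :
    Fin n → Bool :=
  if c x = true ∧ Function.update c x false ∉ C then Function.update c x false else c

lemma downShift_eq_image (C : Set (Fin n → Bool)) (x : Fin n) :
    downShift C x = phiShift C x '' C := rfl

lemma phiShift_cases (C : Set (Fin n → Bool)) (x : Fin n) (c : Fin n → Bool) :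
    phiShift C x c = c ∨
      (c x = true ∧ Function.update c x false ∉ C ∧
        phiShift C x c = Function.update c x false) := by
  classical
  unfold phiShift
  split_ifs with h
  · exact Or.inr ⟨h.1, h.2, rfl⟩
  · exact Or.inl rfl

lemma phiShift_off (C : Set (Fin n → Bool)) (x : Fin n) (c : Fin n → Bool)
    {y : Fin n} (hy : y ≠ x) : phiShift C x c y = c y := by
  rcases phiShift_cases C x c with h | ⟨_, _, h⟩
  · rw [h]
  · rw [h, Function.update_of_ne hy]

lemma phiShift_injOn (C : Set (Fin n → Bool)) (x : Fin n) :
    Set.InjOn (phiShift C x) C := by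
  intro a ha b hb hab
  rcases phiShift_cases C x a with h1 | ⟨ha1, ha2, h1⟩ <;>
    rcases phiShift_cases C x b with h2 | ⟨hb1, hb2, h2⟩
  · rw [h1, h2] at hab; exact hab
  · exfalso; rw [h1, h2] at hab; exact hb2 (hab ▸ ha)
  · exfalso; rw [h1, h2] at hab; exact ha2 (hab ▸ hb)
  · funext y
    by_cases hy : y = x
    · subst hy; rw [ha1, hb1]
    · have := congrFun (h1 ▸ h2 ▸ hab) y
      rwa [Function.update_of_ne hy, Function.update_of_ne hy] at this

lemma update_mem_downShift {C : Set (Fin n → Bool)} {x : Fin n} {c : Fin n → Bool}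
    (hc : c ∈ C) : Function.update c x false ∈ downShift C x := by
  classical
  rw [downShift_eq_image]
  by_cases h : Function.update c x false ∈ C
  · refine ⟨Function.update c x false, h, ?_⟩
    unfold phiShift
    rw [if_neg]
    simp
  · refine ⟨c, hc, ?_⟩
    have hcx : c x = true := by
      by_contra hx
      have hfx : c x = false := by simpa using hx
      exact h (by rw [← hfx, Function.update_eq_self]; exact hc)
    unfold phiShift
    rw [if_pos ⟨hcx, h⟩]

lemma mem_C_of_true {C : Set (Fin n → Bool)} {x : Fin n} {c' : Fin n → Bool}
    (hc' : c' ∈ downShift C x) (ht : c' x = true) :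
    c' ∈ C ∧ Function.update c' x false ∈ C := by
  rw [downShift_eq_image] at hc'
  obtain ⟨c, hc, rfl⟩ := hc'
  rcases phiShift_cases C x c with h | ⟨h1, h2, h⟩
  · rw [h] at ht ⊢
    refine ⟨hc, ?_⟩
    by_contra hu
    have heq : phiShift C x c = Function.update c x false := by
      unfold phiShift; rw [if_pos ⟨ht, hu⟩]
    rw [h] at heq
    have hx := congrFun heq x
    rw [Function.update_self, ht] at hx
    exact Bool.noConfusion hx
  · rw [h, Function.update_self] at ht
    exact Bool.noConfusion ht

/-- Down-shifting preserves cardinality, does not create shattered sets, and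
does not destroy strongly shattered sets. -/
theorem downShift_properties (n : ℕ) (C : Set (Fin n → Bool)) (x : Fin n) :
    (downShift C x).ncard = C.ncard ∧
    (∀ S : Finset (Fin n), Shatters (downShift C x) S → Shatters C S) ∧
    (∀ S : Finset (Fin n), StronglyShatters C S → StronglyShatters (downShift C x) S) := by
  classical
  refine ⟨?_, ?_, ?_⟩
  · rw [downShift_eq_image]
    exact Set.ncard_image_of_injOn (phiShift_injOn C x)
  · intro S hS f
    by_cases hx : x ∈ S
    · obtain ⟨c', hc', hcf⟩ := hS (Function.update f x true)
      have hct : c' x = true := by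
        have := hcf x hx; rwa [Function.update_self] at this
      obtain ⟨hcC, hcuC⟩ := mem_C_of_true hc' hct
      cases hfx : f x with
      | true =>
        refine ⟨c', hcC, fun y hy => ?_⟩
        by_cases hyx : y = x
        · subst hyx; rw [hct, hfx]
        · have := hcf y hy; rwa [Function.update_of_ne hyx] at this
      | false =>
        refine ⟨Function.update c' x false, hcuC, fun y hy => ?_⟩
        by_cases hyx : y = x
        · subst hyx; rw [Function.update_self, hfx]
        · rw [Function.update_of_ne hyx]
          have := hcf y hy; rwa [Function.update_of_ne hyx] at this
    · obtain ⟨c', hc', hcf⟩ := hS f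
      rw [downShift_eq_image] at hc'
      obtain ⟨c, hc, rfl⟩ := hc'
      refine ⟨c, hc, fun y hy => ?_⟩
      have hyx : y ≠ x := fun h => hx (h ▸ hy)
      rw [← phiShift_off C x c hyx]
      exact hcf y hy
  · rintro S ⟨B, hBC, hBagree, hBfull⟩
    by_cases hx : x ∈ S
    · have key : ∀ b ∈ B, Function.update b x false ∈ B := by
        intro b hb
        obtain ⟨b'', hb'', hbf⟩ := hBfull (Function.update b x false)
        have heq : b'' = Function.update b x false := by
          funext y
          by_cases hy : y ∈ S
          · exact hbf y hy
          · rw [Function.update_of_ne (by rintro rfl; exact hy hx)]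
            exact hBagree b'' hb'' b hb y hy
        rwa [heq] at hb''
      refine ⟨B, fun b hb => ?_, hBagree, hBfull⟩
      rw [downShift_eq_image]
      refine ⟨b, hBC hb, ?_⟩
      unfold phiShift
      rw [if_neg]
      rintro ⟨-, h2⟩
      exact h2 (hBC (key b hb))
    · refine ⟨(fun b => Function.update b x false) '' B, ?_, ?_, ?_⟩
      · rintro _ ⟨b, hb, rfl⟩
        exact update_mem_downShift (hBC hb)
      · rintro _ ⟨b, hb, rfl⟩ _ ⟨b', hb', rfl⟩ y hy
        by_cases hyx : y = x
        · subst hyx; simp only [Function.update_self]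
        · simp only [Function.update_of_ne hyx]
          exact hBagree b hb b' hb' y hy
      · intro f
        obtain ⟨b, hb, hbf⟩ := hBfull f
        refine ⟨Function.update b x false, ⟨b, hb, rfl⟩, fun y hy => ?_⟩
        rw [Function.update_of_ne (by rintro rfl; exact hx hy)]
        exact hbf y hy
end

section
/- A concept class C ⊆ {0,1}^n is extremal if and only if its complement {0,1}^n \ C is extremal. -/
variable {n : ℕ}

lemma stronglyShatters_compl_iff (C : Set (Fin n → Bool)) (S : Finset (Fin n)) :
    StronglyShatters C Sᶜ ↔ ¬ Shatters Cᶜ S := by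
  constructor
  · rintro ⟨B, hBC, hagree, hfull⟩ hsh
    obtain ⟨b₀, hb₀, -⟩ := hfull (fun _ => true)
    obtain ⟨c, hc, hcf⟩ := hsh b₀
    obtain ⟨b, hb, hbc⟩ := hfull c
    apply hc
    have hbceq : b = c := by
      funext x
      by_cases hx : x ∈ S
      · rw [hagree b hb b₀ hb₀ x (by simp [hx]), hcf x hx]
      · exact hbc x (by simp [hx])
    rw [← hbceq]; exact hBC hb
  · intro h
    rw [Shatters] at h
    push_neg at h
    obtain ⟨f, hf⟩ := h
    refine ⟨{c | ∀ x ∈ S, c x = f x}, ?_, ?_, ?_⟩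
    · intro c hc
      by_contra hcC
      obtain ⟨x, hx, hne⟩ := hf c hcC
      exact hne (hc x hx)
    · intro b hb b' hb' x hx
      rw [Finset.mem_compl, not_not] at hx
      rw [hb x hx, hb' x hx]
    · intro g
      refine ⟨fun x => if x ∈ S then f x else g x, ?_, ?_⟩
      · intro x hx; simp [hx]
      · intro x hx; rw [Finset.mem_compl] at hx; simp [hx]

/-- `C` is extremal iff its complement is extremal. -/
theorem extremal_iff_compl_extremal (n : ℕ) (C : Set (Fin n → Bool)) :
    Extremal C ↔ Extremal Cᶜ := by
  have H : ∀ (D : Set (Fin n → Bool)), Extremal Dᶜ → Extremal D := by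
    intro D h S hS
    have h3 : StronglyShatters D Sᶜᶜ := by
      rw [stronglyShatters_compl_iff]
      intro hsh
      have h2 := h Sᶜ hsh
      rw [stronglyShatters_compl_iff, compl_compl] at h2
      exact h2 hS
    rwa [compl_compl] at h3
  constructor
  · intro h; exact H Cᶜ (by rwa [compl_compl])
  · exact H C
end

section
/- For complementary concept classes C and C̄ = {0,1}^n \ C over domain X, and for every Y ⊆ X, exactly one of the following holds: C strongly shatters Y, or C̄ shatters X \ Y. -/
variable {n : ℕ}

/-- For every `Y`, exactly one holds: `C` strongly shatters `Y`, or the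
complement of `C` shatters the complement of `Y`. -/
theorem stronglyShatters_xor_compl_shatters (n : ℕ) (C : Set (Fin n → Bool))
    (Y : Finset (Fin n)) :
    Xor' (StronglyShatters C Y) (Shatters Cᶜ Yᶜ) := by
  have key : StronglyShatters C Y ↔ ¬ Shatters Cᶜ Yᶜ := by
    constructor
    · rintro ⟨B, hBC, hagree, hfull⟩ hS
      obtain ⟨b₀, hb₀, -⟩ := hfull (fun _ => true)
      obtain ⟨c, hc, hcb⟩ := hS b₀
      obtain ⟨b, hb, hbc⟩ := hfull c
      have : b = c := by
        funext x
        by_cases hx : x ∈ Y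
        · exact hbc x hx
        · have h1 : b x = b₀ x := hagree b hb b₀ hb₀ x hx
          have h2 : c x = b₀ x := hcb x (Finset.mem_compl.mpr hx)
          rw [h1, h2]
      exact hc (this ▸ hBC hb)
    · intro h
      rw [Shatters] at h
      push_neg at h
      obtain ⟨g, hg⟩ := h
      refine ⟨{h | ∀ x ∉ Y, h x = g x}, ?_, ?_, ?_⟩
      · intro h hh
        by_contra hhC
        obtain ⟨x, hx, hne⟩ := hg h hhC
        exact hne (hh x (Finset.mem_compl.mp hx))
      · intro b hb b' hb' x hx
        rw [hb x hx, hb' x hx]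
      · intro f
        refine ⟨fun x => if x ∈ Y then f x else g x, ?_, ?_⟩
        · intro x hx; simp [hx]
        · intro x hx; simp [hx]
  rcases Classical.em (Shatters Cᶜ Yᶜ) with h | h
  · exact Or.inr ⟨h, fun hs => (key.mp hs) h⟩
  · exact Or.inl ⟨key.mpr h, h⟩
end

section
/- Every downward closed concept class C ⊆ {0,1}^n is extremal, i.e., every set shattered by C is strongly shattered by C. -/
variable {n : ℕ}

/-- Every downward closed class is extremal. -/
theorem downward_closed_extremal (n : ℕ) (C : Set (Fin n → Bool))
    (hdc : ∀ c ∈ C, ∀ c' : Fin n → Bool, (∀ x, c' x ≤ c x) → c' ∈ C) :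
    Extremal C := by
  intro S hS
  refine ⟨{f | ∀ x, x ∉ S → f x = false}, ?_, ?_, ?_⟩
  · intro f hf
    obtain ⟨c, hc, hcf⟩ := hS f
    have : f ∈ C := by
      apply hdc c hc f
      intro x
      by_cases hx : x ∈ S
      · rw [hcf x hx]
      · rw [hf x hx]; exact Bool.false_le _
    exact this
  · intro b hb b' hb' x hx
    rw [hb x hx, hb' x hx]
  · intro f
    refine ⟨fun x => if x ∈ S then f x else false, ?_, ?_⟩
    · intro x hx; simp [hx]
    · intro x hx; simp [hx]
end

section
/- If C ⊆ {0,1}^n is extremal and S ⊆ {1,...,n}, then the restriction C|S (equivalently, the projection of C onto the coordinates in S) is an extremal concept class over domain S. -/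
/-!
A set shattered by `C|S` must lie inside `S`, since outside `S` every restricted concept is
`false`. On such a set restriction changes no coordinate, so it is already shattered by `C`;
restricting a cube of `C` that strongly shatters it then gives a cube of `C|S`.
-/

variable {n : ℕ}

/-- The restriction of a concept to `S` (coordinates outside `S` set to `false`). -/
def restrictF (c : Fin n → Bool) (S : Finset (Fin n)) : Fin n → Bool :=
  fun x => if x ∈ S then c x else false

/-- The restriction `C|S` of a concept class to the coordinate set `S`. -/
def restrictC (C : Set (Fin n → Bool)) (S : Finset (Fin n)) : Set (Fin n → Bool) :=
  (restrictF · S) '' C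

theorem restrictF_apply_of_mem {c : Fin n → Bool} {S : Finset (Fin n)} {x : Fin n} (hx : x ∈ S) :
    restrictF c S x = c x :=
  if_pos hx

theorem Shatters.subset_of_restrictC {C : Set (Fin n → Bool)} {S T : Finset (Fin n)}
    (hT : Shatters (restrictC C S) T) : T ⊆ S := by
  intro x hx
  by_contra hxS
  obtain ⟨_, ⟨c, -, rfl⟩, hagree⟩ := hT fun _ => true
  simpa [restrictF, hxS] using hagree x hx

theorem Shatters.of_restrictC {C : Set (Fin n → Bool)} {S T : Finset (Fin n)}
    (hT : Shatters (restrictC C S) T) : Shatters C T := by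
  intro f
  obtain ⟨_, ⟨c, hc, rfl⟩, hagree⟩ := hT f
  refine ⟨c, hc, fun x hx => ?_⟩
  rw [← restrictF_apply_of_mem (c := c) (hT.subset_of_restrictC hx)]
  exact hagree x hx

theorem IsCube.restrictC {C B : Set (Fin n → Bool)} {S T : Finset (Fin n)}
    (hB : IsCube C B T) (hTS : T ⊆ S) : IsCube (restrictC C S) ((restrictF · S) '' B) T := by
  obtain ⟨hBC, hconst, hfull⟩ := hB
  refine ⟨Set.image_mono hBC, ?_, fun f => ?_⟩
  · rintro _ ⟨b, hb, rfl⟩ _ ⟨b', hb', rfl⟩ x hx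
    simp only [restrictF, hconst b hb b' hb' x hx]
  · obtain ⟨b, hb, hagree⟩ := hfull f
    refine ⟨restrictF b S, Set.mem_image_of_mem _ hb, fun x hx => ?_⟩
    rw [restrictF_apply_of_mem (hTS hx)]
    exact hagree x hx

/-- Restrictions of extremal classes are extremal. -/
theorem restrict_extremal (n : ℕ) (C : Set (Fin n → Bool)) (S : Finset (Fin n))
    (hC : Extremal C) : Extremal (restrictC C S) := by
  intro T hT
  obtain ⟨B, hB⟩ := hC T hT.of_restrictC
  exact ⟨_, hB.restrictC hT.subset_of_restrictC⟩
end

section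
/- If C ⊆ {0,1}^n is extremal and S ⊆ {1,...,n}, then the reduction C^S = {tag(B) : B is a cube of C with dimension set S} is an extremal concept class over domain {1,...,n} \ S. -/
variable {n : ℕ}

/-- The reduction `C^S`: one concept (the tag, with coordinates in `S` set to
`false`) per cube of `C` with dimension set `S`. -/
def reduction (C : Set (Fin n → Bool)) (S : Finset (Fin n)) : Set (Fin n → Bool) :=
  {t | (∀ x ∈ S, t x = false) ∧ ∃ B, IsCube C B S ∧ ∀ b ∈ B, ∀ x, x ∉ S → b x = t x}

/-- Reductions of extremal classes are extremal. -/
theorem reduction_extremal (n : ℕ) (C : Set (Fin n → Bool)) (S : Finset (Fin n))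
    (hC : Extremal C) : Extremal (reduction C S) := by
  intro T hT
  -- T is disjoint from S
  have hdisj : ∀ x ∈ T, x ∉ S := by
    intro x hxT hxS
    obtain ⟨c, hc, hcf⟩ := hT (fun _ => true)
    have h1 := hcf x hxT
    rw [hc.1 x hxS] at h1
    exact Bool.false_ne_true h1
  -- C shatters S ∪ T
  have hshat : Shatters C (S ∪ T) := by
    intro f
    obtain ⟨t, ⟨htS, B, hB, htag⟩, htf⟩ := hT f
    obtain ⟨b, hbB, hbf⟩ := hB.2.2 f
    refine ⟨b, hB.1 hbB, ?_⟩
    intro x hx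
    rcases Finset.mem_union.1 hx with h | h
    · exact hbf x h
    · rw [htag b hbB x (hdisj x h)]; exact htf x h
  obtain ⟨D, hDC, hDagree, hDfull⟩ := hC (S ∪ T) hshat
  -- the cube of the reduction: the "reduction of D"
  refine ⟨{t | (∀ x ∈ S, t x = false) ∧ ∃ b ∈ D, ∀ x, x ∉ S → b x = t x},
    ?_, ?_, ?_⟩
  · -- subset of reduction C S
    rintro t ⟨htS, b0, hb0D, hb0t⟩
    refine ⟨htS, {b | b ∈ D ∧ ∀ x, x ∉ S → b x = t x}, ⟨?_, ?_, ?_⟩, ?_⟩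
    · rintro b ⟨hbD, -⟩; exact hDC hbD
    · rintro b ⟨-, hb⟩ b' ⟨-, hb'⟩ x hx
      rw [hb x hx, hb' x hx]
    · intro f
      obtain ⟨b, hbD, hbg⟩ := hDfull (fun x => if x ∈ S then f x else t x)
      refine ⟨b, ⟨hbD, ?_⟩, ?_⟩
      · intro x hx
        by_cases hxT : x ∈ T
        · have := hbg x (Finset.mem_union_right _ hxT)
          rwa [if_neg hx] at this
        · have hxST : x ∉ S ∪ T := by
            simp [Finset.mem_union, hx, hxT]
          rw [hDagree b hbD b0 hb0D x hxST]
          exact hb0t x hx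
      · intro x hx
        have := hbg x (Finset.mem_union_left _ hx)
        rwa [if_pos hx] at this
    · rintro b ⟨-, hb⟩ x hx; exact hb x hx
  · -- elements agree off T
    rintro t ⟨htS, b, hbD, hbt⟩ t' ⟨ht'S, b', hb'D, hb't⟩ x hx
    by_cases hxS : x ∈ S
    · rw [htS x hxS, ht'S x hxS]
    · have hxST : x ∉ S ∪ T := by simp [Finset.mem_union, hxS, hx]
      rw [← hbt x hxS, ← hb't x hxS]
      exact hDagree b hbD b' hb'D x hxST
  · -- all patterns on T are realized
    intro f
    obtain ⟨b, hbD, hbg⟩ := hDfull (fun x => if x ∈ S then false else f x)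
    refine ⟨fun x => if x ∈ S then false else b x, ⟨?_, b, hbD, ?_⟩, ?_⟩
    · intro x hx; simp only [if_pos hx]
    · intro x hx; simp only [if_neg hx]
    · intro x hx
      have hxS := hdisj x hx
      have h2 := hbg x (Finset.mem_union_right _ hx)
      rw [if_neg hxS] at h2
      simp only [if_neg hxS]
      exact h2
end

section
/- If C ⊆ {0,1}^n is extremal and B ⊆ {0,1}^n is a (sub)cube of the Boolean hypercube, then B ∩ C is an extremal concept class. -/
variable {n : ℕ}

lemma one_coord_extremal (C : Set (Fin n → Bool)) (x₀ : Fin n) (b : Bool)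
    (hC : Extremal C) : Extremal ({c : Fin n → Bool | c x₀ = b} ∩ C) := by
  intro T hT
  -- x₀ ∉ T
  have hx₀T : x₀ ∉ T := by
    intro hmem
    obtain ⟨c, ⟨hcb, -⟩, hcf⟩ := hT (fun _ => !b)
    have h1 : c x₀ = b := hcb
    have h2 := hcf x₀ hmem
    simp [h1] at h2
  have hTC : Shatters C T := fun g => by
    obtain ⟨c, ⟨-, hc⟩, h⟩ := hT g; exact ⟨c, hc, h⟩
  obtain ⟨B₁, hB₁C, hB₁const, hB₁sh⟩ := hC T hTC
  by_cases hcase : ∃ c ∈ B₁, c x₀ = b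
  · obtain ⟨c₁, hc₁, hc₁b⟩ := hcase
    refine ⟨B₁, ?_, hB₁const, hB₁sh⟩
    intro c hc
    exact ⟨by rw [Set.mem_setOf_eq, hB₁const c hc c₁ hc₁ x₀ hx₀T, hc₁b], hB₁C hc⟩
  · push_neg at hcase
    -- all of B₁ has x₀ = !b
    have hB₁nb : ∀ c ∈ B₁, c x₀ = !b := by
      intro c hc
      cases h : c x₀ with
      | false => cases b with
        | false => exact absurd h (hcase c hc)
        | true => rfl
      | true => cases b with
        | false => rfl
        | true => exact absurd h (hcase c hc)
    -- C shatters insert x₀ T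
    have hsh : Shatters C (insert x₀ T) := by
      intro g
      by_cases hg : g x₀ = b
      · obtain ⟨c, ⟨hcb, hcC⟩, hcf⟩ := hT g
        refine ⟨c, hcC, ?_⟩
        intro x hx
        rcases Finset.mem_insert.mp hx with rfl | hx
        · rw [hcb, hg]
        · exact hcf x hx
      · obtain ⟨c, hc, hcf⟩ := hB₁sh g
        refine ⟨c, hB₁C hc, ?_⟩
        intro x hx
        rcases Finset.mem_insert.mp hx with rfl | hx
        · rw [hB₁nb c hc]
          cases b <;> simp_all
        · exact hcf x hx
    obtain ⟨B₂, hB₂C, hB₂const, hB₂sh⟩ := hC _ hsh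
    refine ⟨{c ∈ B₂ | c x₀ = b}, ?_, ?_, ?_⟩
    · rintro c ⟨hc, hcb⟩
      exact ⟨hcb, hB₂C hc⟩
    · rintro c ⟨hc, hcb⟩ c' ⟨hc', hcb'⟩ x hx
      by_cases hxx : x = x₀
      · subst hxx; rw [hcb, hcb']
      · exact hB₂const c hc c' hc' x (by simp [hx, hxx])
    · intro g
      obtain ⟨c, hc, hcf⟩ := hB₂sh (Function.update g x₀ b)
      have hcb : c x₀ = b := by
        rw [hcf x₀ (Finset.mem_insert_self _ _)]; simp
      refine ⟨c, ⟨hc, hcb⟩, ?_⟩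
      intro x hx
      have hxx : x ≠ x₀ := fun h => hx₀T (h ▸ hx)
      rw [hcf x (Finset.mem_insert_of_mem hx), Function.update_of_ne hxx]

lemma finset_inter_extremal (C : Set (Fin n → Bool)) (f : Fin n → Bool)
    (U : Finset (Fin n)) (hC : Extremal C) :
    Extremal ({c : Fin n → Bool | ∀ x ∈ U, c x = f x} ∩ C) := by
  induction U using Finset.induction_on with
  | empty => simpa using hC
  | @insert a U ha ih =>
    have : ({c : Fin n → Bool | ∀ x ∈ insert a U, c x = f x} ∩ C)
        = {c : Fin n → Bool | c a = f a} ∩ ({c : Fin n → Bool | ∀ x ∈ U, c x = f x} ∩ C) := by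
      ext c
      simp only [Set.mem_inter_iff, Set.mem_setOf_eq, Finset.mem_insert]
      constructor
      · rintro ⟨h, hc⟩
        exact ⟨h a (Or.inl rfl), fun x hx => h x (Or.inr hx), hc⟩
      · rintro ⟨h1, h2, hc⟩
        exact ⟨fun x hx => hx.elim (fun e => e ▸ h1) (h2 x), hc⟩
    rw [this]
    exact one_coord_extremal _ a (f a) ih

/-- The intersection of an extremal class with a subcube of the hypercube is
extremal. Here the subcube is given by a coordinate set `S` (its dimension set)
and a fixed assignment `f` outside `S`. -/
theorem cube_inter_extremal (n : ℕ) (C : Set (Fin n → Bool)) (S : Finset (Fin n))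
    (f : Fin n → Bool) (hC : Extremal C) :
    Extremal ({c : Fin n → Bool | ∀ x, x ∉ S → c x = f x} ∩ C) := by
  have : {c : Fin n → Bool | ∀ x, x ∉ S → c x = f x}
      = {c : Fin n → Bool | ∀ x ∈ Sᶜ, c x = f x} := by
    ext c; simp [Finset.mem_compl]
  rw [this]
  exact finset_inter_extremal C f Sᶜ hC
end

section
/- Every extremal class is distance preserving: if C ⊆ {0,1}^n is extremal, then for every c₀, c₁ ∈ C, the graph distance between c₀ and c₁ in the one-inclusion graph of C equals their Hamming distance. -/
variable {n : ℕ}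

/-- The one-inclusion graph of `C`: vertices are the concepts of `C`, edges
connect concepts at Hamming distance 1. -/
def oneInclusionGraph (C : Set (Fin n → Bool)) : SimpleGraph C where
  Adj u v := hammingDist u.1 v.1 = 1
  symm := ⟨by intro u v h; exact (hammingDist_comm v.1 u.1).trans h⟩
  loopless := ⟨by intro u h; simp [hammingDist_self] at h⟩

/-!
Extremality passes to halfspaces `Cᵦ = C ∩ {c | c i = b}`. Write `sh` and `ssh` for the families
of shattered and strongly shattered sets. Splitting at coordinate `i` gives
`#sh C₀ + #sh C₁ ≤ #sh C` and `#ssh C ≤ #ssh C₀ + #ssh C₁`; since `ssh ⊆ sh` always and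
`sh C = ssh C` for extremal `C`, all these inequalities are equalities, so `sh Cᵦ = ssh Cᵦ`.
Iterating, every face `{c ∈ C | c = u on F}` of an extremal class is extremal.

Given `u ≠ v` in `C`, the face spanned by `u` and `v` shatters `{i}` for a coordinate `i` where
they differ, so it contains an `i`-edge `a — update a i (v i)` with `a i = u i`. Either `a = u`,
which gives a neighbour of `u` one step closer to `v`, or `a` lies strictly closer to `u` than
`v` does and we recurse on the pair `u, a`. Chaining such steps gives a path whose length is the
Hamming distance, which bounds the length of every path from below.
-/

open Finset Function SimpleGraph

section Hamming

variable {ι β : Type*} [Fintype ι] [DecidableEq β]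

theorem hammingDist_update_self [DecidableEq ι] {u : ι → β} {i : ι} {b : β} (hb : u i ≠ b) :
    hammingDist u (update u i b) = 1 := by
  rw [hammingDist, card_eq_one]
  refine ⟨i, eq_singleton_iff_unique_mem.2 ⟨by simpa using hb, fun j hj => ?_⟩⟩
  by_contra hji
  simp [update_of_ne hji] at hj

theorem hammingDist_update_add_one [DecidableEq ι] {u v : ι → β} {i : ι} (hi : u i ≠ v i) :
    hammingDist (update u i (v i)) v + 1 = hammingDist u v := by
  have hsplit : ({j | u j ≠ v j} : Finset ι) =
      insert i ({j | update u i (v i) j ≠ v j} : Finset ι) := by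
    ext j
    rcases eq_or_ne j i with rfl | hji <;> simp [update_of_ne, *]
  rw [hammingDist, hammingDist, hsplit, card_insert_of_notMem (by simp)]

theorem hammingDist_lt_of_agree {u v a : ι → β} {i : ι} (hagree : ∀ x, u x = v x → a x = u x)
    (hai : a i = u i) (hi : u i ≠ v i) : hammingDist u a < hammingDist u v := by
  refine card_lt_card <|
    (ssubset_iff_of_subset fun x hx => ?_).2 ⟨i, by simpa using hi, by simp [hai]⟩
  simp only [mem_filter, mem_univ, true_and] at hx ⊢
  exact fun h => hx (hagree x h).symm

end Hamming

theorem Bool.eq_of_ne_of_ne {a b c : Bool} (hb : a ≠ b) (hc : a ≠ c) : b = c :=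
  (Bool.eq_not.2 hb.symm).trans (Bool.eq_not.2 hc.symm).symm

section Shattering

variable {C D : Set (Fin n → Bool)} {S : Finset (Fin n)} {i : Fin n} {b : Bool}

theorem Shatters.mono (h : C ⊆ D) (hS : Shatters C S) : Shatters D S := fun f => by
  obtain ⟨c, hc, hcf⟩ := hS f
  exact ⟨c, h hc, hcf⟩

theorem StronglyShatters.shatters (h : StronglyShatters C S) : Shatters C S := by
  obtain ⟨B, hBC, -, hB⟩ := h
  exact Shatters.mono hBC hB

def halfspace (i : Fin n) (b : Bool) : Set (Fin n → Bool) := {c | c i = b}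

theorem notMem_of_shatters_halfspace (h : Shatters (C ∩ halfspace i b) S) : i ∉ S :=
  fun hi => by
    obtain ⟨c, ⟨-, hci : c i = b⟩, hcf⟩ := h fun _ => !b
    simpa [hci] using hcf i hi

theorem shatters_insert_of_shatters_halfspace (h : ∀ b, Shatters (C ∩ halfspace i b) S) :
    Shatters C (insert i S) := fun f => by
  obtain ⟨c, ⟨hcC, hci⟩, hcf⟩ := h (f i) f
  exact ⟨c, hcC, forall_mem_insert _ _ _ |>.2 ⟨hci, hcf⟩⟩

theorem StronglyShatters.exists_halfspace_of_notMem (h : StronglyShatters C S) (hi : i ∉ S) :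
    ∃ b, StronglyShatters (C ∩ halfspace i b) S := by
  obtain ⟨B, hBC, hagree, hB⟩ := h
  obtain ⟨c, hc, -⟩ := hB fun _ => false
  exact ⟨c i, B, fun x hx => ⟨hBC hx, hagree x hx c hc i hi⟩, hagree, hB⟩

theorem StronglyShatters.halfspace_of_insert (h : StronglyShatters C (insert i S)) (hi : i ∉ S)
    (b : Bool) : StronglyShatters (C ∩ halfspace i b) S := by
  obtain ⟨B, hBC, hagree, hB⟩ := h
  refine ⟨{c ∈ B | c i = b}, fun c hc => ⟨hBC hc.1, hc.2⟩, fun c hc c' hc' x hx => ?_,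
    fun f => ?_⟩
  · rcases eq_or_ne x i with rfl | hxi
    · rw [hc.2, hc'.2]
    · exact hagree c hc.1 c' hc'.1 x (by simp [hxi, hx])
  · obtain ⟨c, hc, hcf⟩ := hB (update f i b)
    refine ⟨c, ⟨hc, by simpa using hcf i (mem_insert_self i S)⟩, fun x hx => ?_⟩
    rw [hcf x (mem_insert_of_mem hx), update_of_ne (ne_of_mem_of_not_mem hx hi)]

end Shattering

section Counting

variable (C : Set (Fin n → Bool)) (i : Fin n)

open Classical in
noncomputable def shatteredSets : Finset (Finset (Fin n)) := {S | Shatters C S}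

open Classical in
noncomputable def stronglyShatteredSets : Finset (Finset (Fin n)) := {S | StronglyShatters C S}

variable {C} in
@[simp] theorem mem_shatteredSets {S : Finset (Fin n)} :
    S ∈ shatteredSets C ↔ Shatters C S := by
  simp [shatteredSets]

variable {C} in
@[simp] theorem mem_stronglyShatteredSets {S : Finset (Fin n)} :
    S ∈ stronglyShatteredSets C ↔ StronglyShatters C S := by
  simp [stronglyShatteredSets]

theorem stronglyShatteredSets_subset_shatteredSets :
    stronglyShatteredSets C ⊆ shatteredSets C := fun _ hS => by
  simpa using (mem_stronglyShatteredSets.1 hS).shatters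

variable {C} in
theorem extremal_iff_shatteredSets_subset :
    Extremal C ↔ shatteredSets C ⊆ stronglyShatteredSets C := by
  simp [Extremal, subset_iff]

theorem card_shatteredSets_halfspace_add_le :
    #(shatteredSets (C ∩ halfspace i false)) + #(shatteredSets (C ∩ halfspace i true)) ≤
      #(shatteredSets C) := by
  rw [← card_union_add_card_inter,
    ← card_memberSubfamily_add_card_nonMemberSubfamily i (shatteredSets C), add_comm]
  refine add_le_add (card_le_card fun S hS => ?_) (card_le_card fun S hS => ?_)
  · rw [mem_inter, mem_shatteredSets, mem_shatteredSets] at hS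
    rw [mem_memberSubfamily, mem_shatteredSets]
    exact ⟨shatters_insert_of_shatters_halfspace (Bool.forall_bool.2 hS),
      notMem_of_shatters_halfspace hS.1⟩
  · rw [mem_nonMemberSubfamily, mem_shatteredSets]
    rcases mem_union.1 hS with h | h <;> rw [mem_shatteredSets] at h <;>
      exact ⟨h.mono Set.inter_subset_left, notMem_of_shatters_halfspace h⟩

theorem card_stronglyShatteredSets_le_halfspace_add :
    #(stronglyShatteredSets C) ≤
      #(stronglyShatteredSets (C ∩ halfspace i false)) +
        #(stronglyShatteredSets (C ∩ halfspace i true)) := by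
  rw [← card_union_add_card_inter,
    ← card_memberSubfamily_add_card_nonMemberSubfamily i (stronglyShatteredSets C), add_comm]
  refine add_le_add (card_le_card fun S hS => ?_) (card_le_card fun S hS => ?_)
  · rw [mem_nonMemberSubfamily, mem_stronglyShatteredSets] at hS
    obtain ⟨b, hb⟩ := hS.1.exists_halfspace_of_notMem hS.2
    cases b
    · exact mem_union_left _ (mem_stronglyShatteredSets.2 hb)
    · exact mem_union_right _ (mem_stronglyShatteredSets.2 hb)
  · rw [mem_memberSubfamily, mem_stronglyShatteredSets] at hS
    rw [mem_inter, mem_stronglyShatteredSets, mem_stronglyShatteredSets]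
    exact ⟨hS.1.halfspace_of_insert hS.2 false, hS.1.halfspace_of_insert hS.2 true⟩

end Counting

theorem hammingDist_le_length {C : Set (Fin n → Bool)} {u v : C}
    (p : (oneInclusionGraph C).Walk u v) : hammingDist u.1 v.1 ≤ p.length := by
  induction p with
  | nil => simp
  | @cons a b c hadj _ ih =>
    have hab : hammingDist a.1 b.1 = 1 := hadj
    have := hammingDist_triangle a.1 b.1 c.1
    rw [Walk.length_cons]
    omega

namespace Extremal

variable {C : Set (Fin n → Bool)}

theorem inter_halfspace (hC : Extremal C) (i : Fin n) (b : Bool) :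
    Extremal (C ∩ halfspace i b) := by
  have hsplit := card_shatteredSets_halfspace_add_le C i
  have hsplit' := card_stronglyShatteredSets_le_halfspace_add C i
  have hC' := card_le_card (extremal_iff_shatteredSets_subset.1 hC)
  have h₀ := card_le_card (stronglyShatteredSets_subset_shatteredSets (C ∩ halfspace i false))
  have h₁ := card_le_card (stronglyShatteredSets_subset_shatteredSets (C ∩ halfspace i true))
  have hcard :
      #(shatteredSets (C ∩ halfspace i b)) ≤ #(stronglyShatteredSets (C ∩ halfspace i b)) := by
    cases b <;> omega
  exact extremal_iff_shatteredSets_subset.2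
    (eq_of_subset_of_card_le (stronglyShatteredSets_subset_shatteredSets _) hcard).ge

theorem face (hC : Extremal C) (u : Fin n → Bool) (F : Finset (Fin n)) :
    Extremal {c ∈ C | ∀ x ∈ F, c x = u x} := by
  classical
  induction F using Finset.induction with
  | empty => simpa using hC
  | insert a F _ ih =>
    convert ih.inter_halfspace a (u a) using 1
    ext c
    simp only [halfspace, Set.mem_inter_iff, Set.mem_ofPred_eq, forall_mem_insert]
    tauto

theorem exists_update_mem (hC : Extremal C) {u v : Fin n → Bool} (hu : u ∈ C) (hv : v ∈ C)
    (huv : u ≠ v) : ∃ i, u i ≠ v i ∧ update u i (v i) ∈ C := by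
  obtain ⟨i, hi⟩ := ne_iff.1 huv
  set F : Finset (Fin n) := {x | u x = v x}
  have hshat : Shatters {c ∈ C | ∀ x ∈ F, c x = u x} {i} := fun f => by
    by_cases hf : f i = u i
    · exact ⟨u, ⟨hu, fun _ _ => rfl⟩, by simp [hf]⟩
    · exact ⟨v, ⟨hv, fun x hx => (mem_filter.1 hx).2.symm⟩,
        by simpa using Bool.eq_of_ne_of_ne hi (Ne.symm hf)⟩
  obtain ⟨B, hBC, hagree, hB⟩ := hC.face u F {i} hshat
  obtain ⟨a, ha, hai⟩ := hB fun _ => u i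
  obtain ⟨a', ha', ha'i⟩ := hB fun _ => v i
  have hedge : update a i (v i) = a' := by
    funext x
    rcases eq_or_ne x i with rfl | hx
    · simpa using (ha'i x (mem_singleton_self x)).symm
    · rw [update_of_ne hx]
      exact hagree a ha a' ha' x (by simpa using hx)
  obtain ⟨haC, haF⟩ := hBC ha
  by_cases hua : u = a
  · subst hua
    exact ⟨i, hi, hedge ▸ (hBC ha').1⟩
  · have hdist : hammingDist u a < hammingDist u v :=
      hammingDist_lt_of_agree (fun x hx => haF x (by simpa [F] using hx))
        (by simpa using hai i (mem_singleton_self i)) hi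
    obtain ⟨j, hj, hjC⟩ := hC.exists_update_mem hu haC hua
    have hj' : u j ≠ v j := fun h => hj (haF j (by simpa [F] using h)).symm
    exact ⟨j, hj', Bool.eq_of_ne_of_ne hj' hj ▸ hjC⟩
termination_by hammingDist u v

theorem exists_walk_length_eq_hammingDist (hC : Extremal C) (u v : C) :
    ∃ p : (oneInclusionGraph C).Walk u v, p.length = hammingDist u.1 v.1 := by
  by_cases huv : u = v
  · subst huv
    exact ⟨.nil, by simp⟩
  obtain ⟨i, hi, hw⟩ := hC.exists_update_mem u.2 v.2 (Subtype.coe_ne_coe.2 huv)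
  have hadj : (oneInclusionGraph C).Adj u ⟨_, hw⟩ := hammingDist_update_self hi
  have hdist := hammingDist_update_add_one hi
  obtain ⟨p, hp⟩ := hC.exists_walk_length_eq_hammingDist ⟨_, hw⟩ v
  exact ⟨.cons hadj p, by rw [Walk.length_cons, hp, hdist]⟩
termination_by hammingDist u.1 v.1
decreasing_by omega

end Extremal

/-- Extremal classes are distance preserving: graph distance in the
one-inclusion graph equals Hamming distance. -/
theorem extremal_distance_preserving (n : ℕ) (C : Set (Fin n → Bool))
    (hC : Extremal C) (c₀ c₁ : C) :
    (oneInclusionGraph C).dist c₀ c₁ = hammingDist c₀.1 c₁.1 := by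
  obtain ⟨p, hp⟩ := hC.exists_walk_length_eq_hammingDist c₀ c₁
  obtain ⟨q, hq⟩ := Reachable.exists_walk_length_eq_dist ⟨p⟩
  exact le_antisymm (hp ▸ dist_le p) (hq ▸ hammingDist_le_length q)
end

section
/- Let C ⊆ {0,1}^n be extremal and let B₁, B₂ be cubes of C with B₁ maximal (contained in no strictly larger cube of C). If dim(B₁) ⊆ dim(B₂), then B₁ = B₂. In particular, distinct maximal cubes of an extremal class have incomparable dimension sets. -/
variable {n : ℕ}

namespace MaxCubeAux

/-- Override `c` on `T` by `g`. -/
def override (c : Fin n → Bool) (T : Finset (Fin n)) (g : Fin n → Bool) : Fin n → Bool :=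
  fun x => if x ∈ T then g x else c x

lemma extremal_halfspace {C : Set (Fin n → Bool)} (hC : Extremal C) (x : Fin n) (ε : Bool) :
    Extremal {c | c ∈ C ∧ c x = ε} := by
  intro S hS
  have hx : x ∉ S := by
    intro hxS
    obtain ⟨c, hc, hmatch⟩ := hS (fun _ => !ε)
    have h1 := hmatch x hxS
    rw [hc.2] at h1
    simp at h1
  have hCS : Shatters C S := by
    intro f
    obtain ⟨c, hc, hm⟩ := hS f
    exact ⟨c, hc.1, hm⟩
  obtain ⟨B, hBC, hag, hpat⟩ := hC S hCS
  obtain ⟨b₀, hb₀B, -⟩ := hpat (fun _ => false)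
  by_cases hb₀x : b₀ x = ε
  · exact ⟨B, fun c hc => ⟨hBC hc, (hag c hc b₀ hb₀B x hx).trans hb₀x⟩, hag, hpat⟩
  · have hsh : Shatters C (insert x S) := by
      intro f
      by_cases hf : f x = ε
      · obtain ⟨c, hc, hm⟩ := hS f
        refine ⟨c, hc.1, fun z hz => ?_⟩
        rcases Finset.mem_insert.mp hz with h | h
        · subst h; rw [hc.2, hf]
        · exact hm z h
      · obtain ⟨c, hcB, hm⟩ := hpat f
        refine ⟨c, hBC hcB, fun z hz => ?_⟩
        rcases Finset.mem_insert.mp hz with h | h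
        · rw [h]
          have h2 : c x = b₀ x := hag c hcB b₀ hb₀B x hx
          rw [h2]
          cases hfx : f x <;> cases hbx : b₀ x <;> cases ε <;> simp_all
        · exact hm z h
    obtain ⟨B', hB'C, hag', hpat'⟩ := hC _ hsh
    refine ⟨{c ∈ B' | c x = ε}, fun c hc => ⟨hB'C hc.1, hc.2⟩, ?_, ?_⟩
    · intro c hc c' hc' z hz
      by_cases hzx : z = x
      · subst hzx; rw [hc.2, hc'.2]
      · exact hag' c hc.1 c' hc'.1 z (by simp [Finset.mem_insert, hzx, hz])
    · intro f
      obtain ⟨c, hcB, hm⟩ := hpat' (fun z => if z = x then ε else f z)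
      have hcx : c x = ε := by simpa using hm x (Finset.mem_insert_self x S)
      refine ⟨c, ⟨hcB, hcx⟩, fun z hz => ?_⟩
      have h3 := hm z (Finset.mem_insert_of_mem hz)
      have hzx : z ≠ x := fun h => hx (h ▸ hz)
      simpa [hzx] using h3

lemma extremal_fix {C : Set (Fin n → Bool)} (hC : Extremal C) (T : Finset (Fin n))
    (q : Fin n → Bool) : Extremal {c | c ∈ C ∧ ∀ x ∈ T, c x = q x} := by
  induction T using Finset.induction_on with
  | empty =>
      have h : {c | c ∈ C ∧ ∀ x ∈ (∅ : Finset (Fin n)), c x = q x} = C := by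
        ext c; simp
      rw [h]; exact hC
  | @insert a T ha ih =>
      have h2 := extremal_halfspace ih a (q a)
      have h : {c | c ∈ C ∧ ∀ x ∈ insert a T, c x = q x} =
          {c | c ∈ {c | c ∈ C ∧ ∀ x ∈ T, c x = q x} ∧ c a = q a} := by
        ext c
        simp only [Set.mem_setOf_eq, Finset.mem_insert]
        constructor
        · rintro ⟨h1, h2⟩
          exact ⟨⟨h1, fun x hx => h2 x (Or.inr hx)⟩, h2 a (Or.inl rfl)⟩
        · rintro ⟨⟨h1, h2⟩, h3⟩
          refine ⟨h1, fun x hx => ?_⟩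
          rcases hx with h | h
          · subst h; exact h3
          · exact h2 x h
      rw [h]; exact h2

lemma extremal_link {C : Set (Fin n → Bool)} (hC : Extremal C) (T : Finset (Fin n)) :
    Extremal {c | ∀ g, override c T g ∈ C} := by
  intro S hS
  have hsh : Shatters C (S ∪ T) := by
    intro f
    obtain ⟨c, hcL, hm⟩ := hS f
    refine ⟨override c T f, hcL f, fun z hz => ?_⟩
    rcases Finset.mem_union.mp hz with h | h
    · by_cases hzT : z ∈ T <;> simp [override, hzT, hm z h]
    · simp [override, h]
  obtain ⟨B, hBC, hag, hpat⟩ := hC _ hsh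
  have hBL : ∀ c ∈ B, ∀ g, override c T g ∈ C := by
    intro c hc g
    obtain ⟨b', hb'B, hm⟩ := hpat (fun x => if x ∈ T then g x else c x)
    have heq : b' = override c T g := by
      funext z
      by_cases hzT : z ∈ T
      · have := hm z (Finset.mem_union_right _ hzT)
        simpa [override, hzT] using this
      · have hoz : override c T g z = c z := by simp [override, hzT]
        rw [hoz]
        by_cases hzS : z ∈ S
        · have := hm z (Finset.mem_union_left _ hzS)
          simpa [hzT] using this
        · exact hag b' hb'B c hc z (by simp [Finset.mem_union, hzS, hzT])
    exact heq ▸ hBC hb'B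
  refine ⟨{c ∈ B | ∀ x ∈ T, x ∉ S → c x = false}, ?_, ?_, ?_⟩
  · intro c hc
    exact hBL c hc.1
  · intro c hc c' hc' z hz
    by_cases hzT : z ∈ T
    · rw [hc.2 z hzT hz, hc'.2 z hzT hz]
    · exact hag c hc.1 c' hc'.1 z (by simp [Finset.mem_union, hz, hzT])
  · intro f
    obtain ⟨c, hcB, hm⟩ := hpat (fun x => if x ∈ S then f x else false)
    refine ⟨c, ⟨hcB, fun x hxT hxS => by
      simpa [hxS] using hm x (Finset.mem_union_right _ hxT)⟩, fun z hz => ?_⟩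
    simpa [hz] using hm z (Finset.mem_union_left _ hz)

lemma exists_neighbor : ∀ (d : ℕ) (C : Set (Fin n → Bool)) (b c : Fin n → Bool),
    Extremal C → b ∈ C → c ∈ C → b ≠ c →
    (Finset.univ.filter (fun x => b x ≠ c x)).card ≤ d →
    ∃ y, Function.update b y (!(b y)) ∈ C := by
  intro d
  induction d with
  | zero =>
      intro C b c _ _ _ hne hcard
      exfalso
      apply hne
      funext x
      have h0 : (Finset.univ.filter (fun x => b x ≠ c x)) = ∅ :=
        Finset.card_eq_zero.mp (Nat.le_zero.mp hcard)
      by_contra h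
      have : x ∈ Finset.univ.filter (fun x => b x ≠ c x) := by
        simp [h]
      rw [h0] at this
      exact absurd this (Finset.notMem_empty x)
  | succ d ih =>
      intro C b c hC hb hc hne hcard
      set Δ := Finset.univ.filter (fun x => b x ≠ c x) with hΔ
      have hΔne : Δ.Nonempty := by
        rcases Finset.eq_empty_or_nonempty Δ with h | h
        · exfalso
          apply hne
          funext x
          by_contra hx
          have : x ∈ Δ := by simp [hΔ, hx]
          rw [h] at this
          exact absurd this (Finset.notMem_empty x)
        · exact h
      obtain ⟨y, hy⟩ := hΔne
      have hby : b y ≠ c y := by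
        have := Finset.mem_filter.mp hy
        exact this.2
      have hC' : Extremal {g | g ∈ C ∧ ∀ x ∈ Δᶜ, g x = b x} := extremal_fix hC Δᶜ b
      have hbC' : b ∈ {g | g ∈ C ∧ ∀ x ∈ Δᶜ, g x = b x} := ⟨hb, fun _ _ => rfl⟩
      have hcC' : c ∈ {g | g ∈ C ∧ ∀ x ∈ Δᶜ, g x = b x} := by
        refine ⟨hc, fun x hx => ?_⟩
        have hxΔ : x ∉ Δ := Finset.mem_compl.mp hx
        have : ¬ (b x ≠ c x) := fun h => hxΔ (by simp [hΔ, h])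
        exact (not_not.mp this).symm
      have hsh : Shatters {g | g ∈ C ∧ ∀ x ∈ Δᶜ, g x = b x} {y} := by
        intro f
        by_cases hf : f y = b y
        · exact ⟨b, hbC', fun z hz => by rw [Finset.mem_singleton.mp hz, hf]⟩
        · refine ⟨c, hcC', fun z hz => ?_⟩
          rw [Finset.mem_singleton.mp hz]
          cases hb1 : b y <;> cases hc1 : c y <;> cases hf1 : f y <;> simp_all
      obtain ⟨E, hEC', hagE, hpatE⟩ := hC' _ hsh
      obtain ⟨e, heE, hme⟩ := hpatE (fun _ => !(b y))
      obtain ⟨e', he'E, hme'⟩ := hpatE (fun _ => b y)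
      have hey : e y = !(b y) := hme y (Finset.mem_singleton_self y)
      have he'y : e' y = b y := hme' y (Finset.mem_singleton_self y)
      by_cases he'b : e' = b
      · refine ⟨y, ?_⟩
        have : Function.update b y (!(b y)) = e := by
          funext z
          by_cases hzy : z = y
          · subst hzy; rw [Function.update_self, hey]
          · rw [Function.update_of_ne hzy]
            rw [← he'b]
            exact (hagE e heE e' he'E z (by simp [hzy])).symm
        rw [this]
        exact (hEC' heE).1
      · have hsubΔ : Finset.univ.filter (fun x => b x ≠ e' x) ⊆ Δ.erase y := by
          intro x hx
          have hx2 : b x ≠ e' x := (Finset.mem_filter.mp hx).2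
          refine Finset.mem_erase.mpr ⟨?_, ?_⟩
          · intro h; subst h; exact hx2 he'y.symm
          · by_contra hxΔ
            exact hx2 ((hEC' he'E).2 x (Finset.mem_compl.mpr hxΔ)).symm
        have hcard2 : (Finset.univ.filter (fun x => b x ≠ e' x)).card ≤ d := by
          have h1 := Finset.card_le_card hsubΔ
          have h2 : (Δ.erase y).card = Δ.card - 1 := Finset.card_erase_of_mem hy
          omega
        exact ih C b e' hC hb (hEC' he'E).1 (fun h => he'b h.symm) hcard2

end MaxCubeAux
open MaxCubeAux in
/-- In an extremal class, a maximal cube whose dimension set is contained in the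
dimension set of another cube equals that cube. -/
theorem maximal_cube_dim_subset (n : ℕ) (C : Set (Fin n → Bool))
    (B₁ B₂ : Set (Fin n → Bool)) (S₁ S₂ : Finset (Fin n))
    (hC : Extremal C) (h₁ : IsCube C B₁ S₁)
    (hmax : ∀ B' S', IsCube C B' S' → B₁ ⊆ B' → B₁ = B')
    (h₂ : IsCube C B₂ S₂) (hsub : S₁ ⊆ S₂) : B₁ = B₂ := by
  obtain ⟨hB₁C, hag₁, hpat₁⟩ := h₁
  have hB₂C := h₂.1
  have hag₂ := h₂.2.1
  have hpat₂ := h₂.2.2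
  obtain ⟨b, hbB, -⟩ := hpat₁ (fun _ => false)
  obtain ⟨b₂, hb₂B, -⟩ := hpat₂ (fun _ => false)
  have hchar₁ : ∀ g, g ∈ B₁ ↔ ∀ x, x ∉ S₁ → g x = b x := by
    intro g
    constructor
    · intro hg x hx
      exact hag₁ g hg b hbB x hx
    · intro hg
      obtain ⟨c, hcB, hm⟩ := hpat₁ g
      have hcg : c = g := by
        funext z
        by_cases hz : z ∈ S₁
        · exact hm z hz
        · rw [hag₁ c hcB b hbB z hz, ← hg z hz]
      exact hcg ▸ hcB
  have hchar₂ : ∀ g, g ∈ B₂ ↔ ∀ x, x ∉ S₂ → g x = b₂ x := by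
    intro g
    constructor
    · intro hg x hx
      exact hag₂ g hg b₂ hb₂B x hx
    · intro hg
      obtain ⟨c, hcB, hm⟩ := hpat₂ g
      have hcg : c = g := by
        funext z
        by_cases hz : z ∈ S₂
        · exact hm z hz
        · rw [hag₂ c hcB b₂ hb₂B z hz, ← hg z hz]
      exact hcg ▸ hcB
  have key : ∀ x, x ∉ S₂ → b x = b₂ x := by
    by_contra hk
    push_neg at hk
    obtain ⟨y, hyS₂, hyne⟩ := hk
    have hy1 : y ∉ S₁ := fun h' => hyS₂ (hsub h')
    set L := {c : Fin n → Bool | ∀ g, override c S₁ g ∈ C} with hL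
    set Cs := {c | c ∈ L ∧ ∀ x ∈ S₁, c x = b x} with hCsdef
    have hCs : Extremal Cs := extremal_fix (extremal_link hC S₁) S₁ b
    have hbCs : b ∈ Cs := by
      refine ⟨fun g => hB₁C ((hchar₁ _).mpr (fun x hx => ?_)), fun _ _ => rfl⟩
      simp [override, hx]
    set b₂' := override b₂ S₁ b with hb₂'def
    have hb₂'Cs : b₂' ∈ Cs := by
      constructor
      · intro g
        have heq : override b₂' S₁ g = override b₂ S₁ g := by
          funext z
          by_cases hz : z ∈ S₁ <;> simp [override, hb₂'def, hz]
        rw [hL, Set.mem_setOf_eq] at *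
        rw [heq]
        refine hB₂C ((hchar₂ _).mpr (fun x hx => ?_))
        have hx1 : x ∉ S₁ := fun h => hx (hsub h)
        simp [override, hx1]
      · intro x hx
        simp [hb₂'def, override, hx]
    have hneb : b ≠ b₂' := by
      intro h
      apply hyne
      have h2 : b₂' y = b₂ y := by simp [hb₂'def, override, hy1]
      rw [h, h2]
    obtain ⟨z, hz⟩ := exists_neighbor
      (Finset.univ.filter (fun x => b x ≠ b₂' x)).card Cs b b₂' hCs hbCs hb₂'Cs hneb le_rfl
    set u := Function.update b z (!(b z)) with hudef
    have hz1 : z ∉ S₁ := by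
      intro hzS
      have h3 := hz.2 z hzS
      rw [hudef, Function.update_self] at h3
      simp at h3
    set B' := {h : Fin n → Bool | ∀ x, x ∉ insert z S₁ → h x = b x} with hB'def
    have hcube : IsCube C B' (insert z S₁) := by
      refine ⟨?_, ?_, ?_⟩
      · intro h hh
        by_cases hhz : h z = b z
        · refine hB₁C ((hchar₁ h).mpr (fun x hx => ?_))
          by_cases hxz : x = z
          · subst hxz; exact hhz
          · exact hh x (by simp [Finset.mem_insert, hxz, hx])
        · have hform : override u S₁ h = h := by
            funext x
            by_cases hxS : x ∈ S₁
            · simp [override, hxS]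
            · by_cases hxz : x = z
              · subst hxz
                have hval : h x = !(b x) := by
                  cases hb' : b x <;> cases hh' : h x <;> simp_all
                simp [override, hxS, hudef, Function.update_self, hval]
              · have := hh x (by simp [Finset.mem_insert, hxz, hxS])
                simp [override, hxS, hudef, Function.update_of_ne hxz, this]
          have h4 := hz.1 h
          rwa [hform] at h4
      · intro h hh h' hh' x hx
        rw [hh x hx, hh' x hx]
      · intro f
        exact ⟨fun x => if x ∈ insert z S₁ then f x else b x,
          fun x hx => by simp [hx], fun x hx => by simp [hx]⟩
    have hB₁B' : B₁ ⊆ B' := by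
      intro g hg
      intro x hx
      exact (hchar₁ g).mp hg x (fun h => hx (Finset.mem_insert_of_mem h))
    have heq := hmax B' _ hcube hB₁B'
    have huB' : u ∈ B' := by
      intro x hx
      have hxz : x ≠ z := fun h => hx (h ▸ Finset.mem_insert_self z S₁)
      rw [hudef, Function.update_of_ne hxz]
    have huB₁ : u ∈ B₁ := heq ▸ huB'
    have h5 := (hchar₁ u).mp huB₁ z hz1
    rw [hudef, Function.update_self] at h5
    simp at h5
  have hB₁₂ : B₁ ⊆ B₂ := by
    intro g hg
    refine (hchar₂ g).mpr (fun x hx => ?_)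
    rw [(hchar₁ g).mp hg x (fun h => hx (hsub h)), key x hx]
  exact hmax B₂ S₂ h₂ hB₁₂
end

section
/- Let C ⊆ {0,1}^n be extremal, let Y ⊆ {1,...,n}, and let D ⊆ Y be the dimension set of some cube of the restriction C|Y. Then D is also the dimension set of some cube of C. -/
variable {n : ℕ}

/-- If `D` is the dimension set of a cube of `C|Y`, then `D` is the dimension
set of a cube of `C`. -/
theorem dim_of_cube_of_restriction (n : ℕ) (C : Set (Fin n → Bool))
    (Y D : Finset (Fin n)) (B : Set (Fin n → Bool))
    (hC : Extremal C) (hDY : D ⊆ Y) (hcube : IsCube (restrictC C Y) B D) :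
    StronglyShatters C D := by
  apply hC
  intro f
  obtain ⟨b, hbB, hbf⟩ := hcube.2.2 f
  obtain ⟨c, hcC, rfl⟩ := hcube.1 hbB
  exact ⟨c, hcC, fun x hx => by
    have : restrictF c Y x = f x := hbf x hx
    simpa [restrictF, hDY hx] using this⟩
end

section
/- Let C ⊆ {0,1}^n be extremal and let r : C → st(C) be a bijection between C and the family of strongly shattered sets of C. Then r is non-clashing if and only if for every Y ⊆ {1,...,n} and every sample s ∈ C|Y, there is exactly one concept c ∈ C with c|Y = s and r(c) ⊆ Y. -/
set_option maxHeartbeats 1000000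


variable {n : ℕ}

/-- For an extremal class `C` and a bijective representation map `r` from `C`
onto `st(C)`, `r` is non-clashing iff every sample of `C` has exactly one
consistent concept whose representative is contained in the sample domain. -/
theorem non_clashing_iff_unique_consistent (n : ℕ) (C : Set (Fin n → Bool))
    (hC : Extremal C) (r : (Fin n → Bool) → Finset (Fin n))
    (hmem : ∀ c ∈ C, StronglyShatters C (r c))
    (hinj : ∀ c ∈ C, ∀ c' ∈ C, r c = r c' → c = c')
    (hsurj : ∀ S : Finset (Fin n), StronglyShatters C S → ∃ c ∈ C, r c = S) :
    (∀ c ∈ C, ∀ c' ∈ C, c ≠ c' → ∃ x ∈ r c ∪ r c', c x ≠ c' x) ↔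
    (∀ Y : Finset (Fin n), ∀ s ∈ C,
      ∃! c, c ∈ C ∧ (∀ x ∈ Y, c x = s x) ∧ r c ⊆ Y) := by
  classical
  constructor
  · intro hnc Y s hs
    -- agreement on `r c ∪ r c'` implies equality (contrapositive of non-clashing)
    have hclash : ∀ c ∈ C, ∀ c' ∈ C, (∀ x ∈ r c ∪ r c', c x = c' x) → c = c' := by
      intro c hc c' hc' hagr
      by_contra hne
      obtain ⟨x, hx, hxne⟩ := hnc c hc c' hc' hne
      exact hxne (hagr x hx)
    set CF : Finset (Fin n → Bool) := (Set.toFinite C).toFinset with hCFdef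
    have hCF : ∀ c, c ∈ CF ↔ c ∈ C := fun c => Set.Finite.mem_toFinset _
    set ρ : (Fin n → Bool) → Finset (Fin n) := fun c => Y.filter (fun x => c x = true)
      with hρdef
    have hρY : ∀ c, ρ c ⊆ Y := fun c => Finset.filter_subset _ _
    have hρmem : ∀ c x, x ∈ ρ c ↔ x ∈ Y ∧ c x = true := by
      intro c x; simp [hρdef]
    have hρeq : ∀ c c', ρ c = ρ c' ↔ (∀ x ∈ Y, c x = c' x) := by
      intro c c'
      constructor
      · intro h x hx
        have := congrArg (x ∈ ·) h
        simp only [hρmem, hx, true_and, eq_iff_iff] at this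
        cases hcx : c x <;> cases hcx' : c' x <;> simp [hcx, hcx'] at this ⊢
      · intro h
        ext x
        simp only [hρmem]
        constructor <;> rintro ⟨hx, hv⟩ <;> exact ⟨hx, by rw [← hv, h x hx]⟩
    set 𝒜 : Finset (Finset (Fin n)) := CF.image ρ with h𝒜def
    set D : Finset (Fin n → Bool) := CF.filter (fun c => r c ⊆ Y) with hDdef
    set stY : Finset (Finset (Fin n)) :=
      Finset.univ.filter (fun S => StronglyShatters C S ∧ S ⊆ Y) with hstYdef
    -- every set shattered by the trace family is in stY
    have hshat_sub : 𝒜.shatterer ⊆ stY := by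
      intro S hS
      rw [Finset.mem_shatterer] at hS
      obtain ⟨u, hu𝒜, hSu⟩ := hS (Finset.Subset.refl S)
      have hSsubu : S ⊆ u := Finset.inter_eq_left.1 hSu
      obtain ⟨c₀, _, rfl⟩ := Finset.mem_image.1 hu𝒜
      have hSY : S ⊆ Y := hSsubu.trans (hρY c₀)
      have hSshat : Shatters C S := by
        intro f
        have hts : S.filter (fun x => f x = true) ⊆ S := Finset.filter_subset _ _
        obtain ⟨u, hu𝒜, hSu⟩ := hS hts
        obtain ⟨c, hcCF, rfl⟩ := Finset.mem_image.1 hu𝒜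
        refine ⟨c, (hCF c).1 hcCF, fun x hx => ?_⟩
        have hxY : x ∈ Y := hSY hx
        have h1 : c x = true ↔ f x = true := by
          constructor
          · intro hcx
            have : x ∈ S ∩ ρ c := Finset.mem_inter.2 ⟨hx, (hρmem c x).2 ⟨hxY, hcx⟩⟩
            rw [hSu] at this
            exact (Finset.mem_filter.1 this).2
          · intro hfx
            have : x ∈ S.filter (fun x => f x = true) := Finset.mem_filter.2 ⟨hx, hfx⟩
            rw [← hSu] at this
            exact ((hρmem c x).1 (Finset.mem_inter.1 this).2).2
        cases hcx : c x <;> cases hfx : f x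
        · rfl
        · have := h1.mpr hfx; rw [hcx] at this; exact absurd this (by simp)
        · have := h1.mp hcx; rw [hfx] at this; exact absurd this (by simp)
        · rfl
      exact Finset.mem_filter.2 ⟨Finset.mem_univ _, hC S hSshat, hSY⟩
    -- |stY| = |D| via the bijection r
    have hcard_stY : stY.card = D.card := by
      refine (Finset.card_bij (fun c _ => r c) ?_ ?_ ?_).symm
      · intro c hc
        rw [hDdef, Finset.mem_filter, hCF] at hc
        exact Finset.mem_filter.2 ⟨Finset.mem_univ _, hmem c hc.1, hc.2⟩
      · intro c hc c' hc' h
        rw [hDdef, Finset.mem_filter, hCF] at hc hc'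
        exact hinj c hc.1 c' hc'.1 h
      · intro S hS
        rw [hstYdef, Finset.mem_filter] at hS
        obtain ⟨c, hcC, rfl⟩ := hsurj S hS.2.1
        exact ⟨c, Finset.mem_filter.2 ⟨(hCF c).2 hcC, hS.2.2⟩, rfl⟩
    -- injectivity of ρ on D
    have hρinj : ∀ c ∈ D, ∀ c' ∈ D, ρ c = ρ c' → c = c' := by
      intro c hc c' hc' h
      rw [hDdef, Finset.mem_filter, hCF] at hc hc'
      refine hclash c hc.1 c' hc'.1 fun x hx => ?_
      have hxY : x ∈ Y := by
        rcases Finset.mem_union.1 hx with h' | h'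
        exacts [hc.2 h', hc'.2 h']
      exact (hρeq c c').1 h x hxY
    have hDcard : (D.image ρ).card = D.card := Finset.card_image_of_injOn hρinj
    have hDsub : D.image ρ ⊆ 𝒜 :=
      Finset.image_subset_image (Finset.filter_subset _ _)
    have h𝒜le : 𝒜.card ≤ (D.image ρ).card := by
      calc 𝒜.card ≤ 𝒜.shatterer.card := Finset.card_le_card_shatterer 𝒜
        _ ≤ stY.card := Finset.card_le_card hshat_sub
        _ = D.card := hcard_stY
        _ = (D.image ρ).card := hDcard.symm
    have himg : D.image ρ = 𝒜 := Finset.eq_of_subset_of_card_le hDsub h𝒜le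
    -- existence
    have hρs𝒜 : ρ s ∈ 𝒜 := Finset.mem_image.2 ⟨s, (hCF s).2 hs, rfl⟩
    rw [← himg] at hρs𝒜
    obtain ⟨c, hcD, hcρ⟩ := Finset.mem_image.1 hρs𝒜
    have hcD' := Finset.mem_filter.1 hcD
    refine ⟨c, ⟨(hCF c).1 hcD'.1, (hρeq c s).1 hcρ, hcD'.2⟩, ?_⟩
    -- uniqueness
    rintro c' ⟨hc'C, hc'agr, hc'r⟩
    refine hclash c' hc'C c ((hCF c).1 hcD'.1) fun x hx => ?_
    have hxY : x ∈ Y := by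
      rcases Finset.mem_union.1 hx with h' | h'
      exacts [hc'r h', hcD'.2 h']
    rw [hc'agr x hxY, (hρeq c s).1 hcρ x hxY]
  · intro h c hc c' hc' hne
    by_contra hcon
    push_neg at hcon
    obtain ⟨u, hu, huniq⟩ := h (r c ∪ r c') c hc
    have h1 : c = u := huniq c ⟨hc, fun x _ => rfl, Finset.subset_union_left⟩
    have h2 : c' = u := huniq c' ⟨hc', fun x hx => (hcon x hx).symm,
      Finset.subset_union_right⟩
    exact hne (h1.trans h2.symm)
end
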